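/- Let X ⊆ ℂⁿ be a compact set, 1 ≤ q ≤ n, and f ∈ C(X). If the function f̃ defined by f̃(z) = sup{φ(z) : φ ∈ P_q(X), φ ≤ f on X} is continuous on X, then f̃ ∈ P_q(X). -/

import Mathlib

/-!
Fix `ε > 0`. At each `z ∈ X` some admissible `φ` nearly attains the supremum `f̃ z`, and `φ` is
uniformly close on `X` to some `g ∈ P_q(U)` with `U ⊇ X` open; then `g ≤ f̃ + ε` on `X`, and by
continuity of `g` and `f̃`, `g > f̃ - ε` near `z`. Finitely many such neighborhoods cover the
compact `X`; the maximum of the corresponding `g`s stays in `P_q` of the intersection of their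
domains, because the sub-mean value inequality passes to maxima, and it is `ε`-close to `f̃` on `X`.
If there is no admissible `φ` at all, `f̃` is the constant `sSup ∅ = 0`.
-/

open MeasureTheory Metric Filter

noncomputable section

instance (m : ℕ) : MeasurableSpace (EuclideanSpace ℂ (Fin m)) := WithLp.measurableSpace 2 (Fin m → ℂ)
instance (m : ℕ) : BorelSpace (EuclideanSpace ℂ (Fin m)) := PiLp.borelSpace 2

/-- A function on `s ⊆ ℂ^m ≅ ℝ^{2m}` is subharmonic on `s` if it is continuous on `s` and
satisfies the sub-mean value inequality over balls contained in `s`. -/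
def SubharmonicOn {m : ℕ} (f : EuclideanSpace ℂ (Fin m) → ℝ)
    (s : Set (EuclideanSpace ℂ (Fin m))) : Prop :=
  ContinuousOn f s ∧ ∀ c ∈ s, ∀ r > (0 : ℝ), closedBall c r ⊆ s →
    f c ≤ ⨍ w in ball c r, f w

/-- `f ∈ P_q(U)`: `f` is continuous on the open set `U ⊆ ℂ^n` and its restriction to the
intersection of `U` with any `q`-dimensional complex affine subspace (parametrized by a
complex-linear isometric embedding of `ℂ^q`, so that the subspace carries the metric inherited
from `ℂ^n` under the identification `ℂ^q ≅ ℝ^{2q}`) is subharmonic. -/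
def PqOn (n q : ℕ) (f : EuclideanSpace ℂ (Fin n) → ℝ)
    (U : Set (EuclideanSpace ℂ (Fin n))) : Prop :=
  ContinuousOn f U ∧
  ∀ (p : EuclideanSpace ℂ (Fin n))
    (A : EuclideanSpace ℂ (Fin q) →ₗᵢ[ℂ] EuclideanSpace ℂ (Fin n)),
    SubharmonicOn (fun w => f (p + A w)) {w | p + A w ∈ U}

/-- `f ∈ P_q(X)` for a compact set `X`: on `X`, `f` is a uniform limit of functions
belonging to `P_q` of open neighborhoods of `X`. -/
def MemPqX (n q : ℕ) (X : Set (EuclideanSpace ℂ (Fin n)))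
    (f : EuclideanSpace ℂ (Fin n) → ℝ) : Prop :=
  ∀ ε > (0 : ℝ), ∃ (U : Set (EuclideanSpace ℂ (Fin n))) (g : EuclideanSpace ℂ (Fin n) → ℝ),
    IsOpen U ∧ X ⊆ U ∧ PqOn n q g U ∧ ∀ z ∈ X, |g z - f z| < ε

/-- The upper envelope `f̃(z) = sup {φ z : φ ∈ P_q(X), φ ≤ f on X}`. -/
def ftilde (n q : ℕ) (X : Set (EuclideanSpace ℂ (Fin n)))
    (f : EuclideanSpace ℂ (Fin n) → ℝ) (z : EuclideanSpace ℂ (Fin n)) : ℝ :=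
  sSup {y | ∃ φ : EuclideanSpace ℂ (Fin n) → ℝ,
    MemPqX n q X φ ∧ (∀ x ∈ X, φ x ≤ f x) ∧ y = φ z}

open scoped Topology

theorem average_mono {α : Type*} [MeasurableSpace α] {μ : Measure α} {F G : α → ℝ}
    (hF : Integrable F μ) (hG : Integrable G μ) (h : F ≤ G) :
    ⨍ x, F x ∂μ ≤ ⨍ x, G x ∂μ := by
  rw [average_eq, average_eq]
  exact smul_le_smul_of_nonneg_left (integral_mono hF hG h) (by positivity)

section Subharmonic

variable {m : ℕ} {F G : EuclideanSpace ℂ (Fin m) → ℝ} {s t : Set (EuclideanSpace ℂ (Fin m))}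

theorem SubharmonicOn.mono (hF : SubharmonicOn F s) (hts : t ⊆ s) : SubharmonicOn F t :=
  ⟨hF.1.mono hts, fun c hc r hr hsub => hF.2 c (hts hc) r hr (hsub.trans hts)⟩

theorem SubharmonicOn.sup (hF : SubharmonicOn F s) (hG : SubharmonicOn G s) :
    SubharmonicOn (F ⊔ G) s := by
  refine ⟨hF.1.sup hG.1, fun c hc r hr hsub => ?_⟩
  have integrable {H : EuclideanSpace ℂ (Fin m) → ℝ} (hH : ContinuousOn H s) :
      IntegrableOn H (ball c r) :=
    ((hH.mono hsub).integrableOn_compact (isCompact_closedBall c r)).mono_set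
      ball_subset_closedBall
  have hFG := integrable (hF.1.sup hG.1)
  exact max_le
    ((hF.2 c hc r hr hsub).trans (average_mono (integrable hF.1) hFG le_sup_left))
    ((hG.2 c hc r hr hsub).trans (average_mono (integrable hG.1) hFG le_sup_right))

end Subharmonic

section Pq

variable {n q : ℕ} {g g₁ g₂ : EuclideanSpace ℂ (Fin n) → ℝ} {U V : Set (EuclideanSpace ℂ (Fin n))}

theorem pqOn_const (a : ℝ) : PqOn n q (fun _ => a) U :=
  ⟨continuousOn_const, fun _ _ => ⟨continuousOn_const, fun _ _ _ hr _ =>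
    (setAverage_const (measure_ball_pos _ _ hr).ne' measure_ball_lt_top.ne a).ge⟩⟩

theorem PqOn.mono (hg : PqOn n q g U) (hVU : V ⊆ U) : PqOn n q g V :=
  ⟨hg.1.mono hVU, fun p A => (hg.2 p A).mono fun _ hw => hVU hw⟩

theorem PqOn.sup (h₁ : PqOn n q g₁ U) (h₂ : PqOn n q g₂ U) : PqOn n q (g₁ ⊔ g₂) U :=
  ⟨h₁.1.sup h₂.1, fun p A => (h₁.2 p A).sup (h₂.2 p A)⟩

theorem PqOn.finset_sup' {ι : Type*} {t : Finset ι} (ht : t.Nonempty)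
    {g : ι → EuclideanSpace ℂ (Fin n) → ℝ} {U : ι → Set (EuclideanSpace ℂ (Fin n))}
    (hg : ∀ i ∈ t, PqOn n q (g i) (U i)) : PqOn n q (t.sup' ht g) (⋂ i ∈ t, U i) :=
  Finset.sup'_induction (p := fun h => PqOn n q h (⋂ i ∈ t, U i)) ht g
    (fun _ h₁ _ h₂ => h₁.sup h₂) fun i hi => (hg i hi).mono (Set.biInter_subset_of_mem hi)

theorem memPqX_const (X : Set (EuclideanSpace ℂ (Fin n))) (a : ℝ) :
    MemPqX n q X (fun _ => a) := fun ε hε =>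
  ⟨Set.univ, fun _ => a, isOpen_univ, Set.subset_univ X, pqOn_const a,
    fun _ _ => by simpa using hε⟩

theorem memPqX_of_pointwise_approx {X : Set (EuclideanSpace ℂ (Fin n))} (hX : IsCompact X)
    {F : EuclideanSpace ℂ (Fin n) → ℝ} (hF : ContinuousOn F X)
    (happrox : ∀ ε > (0 : ℝ), ∀ z ∈ X, ∃ (U : Set (EuclideanSpace ℂ (Fin n)))
      (g : EuclideanSpace ℂ (Fin n) → ℝ), IsOpen U ∧ X ⊆ U ∧ PqOn n q g U ∧
        (∀ x ∈ X, g x ≤ F x + ε) ∧ F z - ε < g z) :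
    MemPqX n q X F := by
  intro ε hε
  rcases X.eq_empty_or_nonempty with rfl | ⟨x₀, hx₀⟩
  · exact ⟨Set.univ, fun _ => 0, isOpen_univ, Set.empty_subset _, pqOn_const 0, by simp⟩
  choose! U g hU hXU hg hg_le hlt_g using happrox (ε / 2) (half_pos hε)
  have hnhds : ∀ z ∈ X, {x | F x - ε < g z x} ∈ 𝓝[X] z := fun z hz => by
    have hcont : ContinuousWithinAt (fun x => g z x - F x) X z :=
      ((hg z hz).1.continuousAt ((hU z hz).mem_nhds (hXU z hz hz))).continuousWithinAt.sub
        (hF z hz)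
    have hz_gt : -ε < g z z - F z := by linarith [hlt_g z hz]
    filter_upwards [hcont.eventually (lt_mem_nhds hz_gt)] with x hx
    linarith
  obtain ⟨t, htX, hcover⟩ := hX.elim_nhdsWithin_subcover _ hnhds
  have ht : t.Nonempty := by
    obtain ⟨z, hz, -⟩ := Set.mem_iUnion₂.1 (hcover hx₀)
    exact ⟨z, hz⟩
  refine ⟨⋂ z ∈ t, U z, t.sup' ht g, isOpen_biInter_finset fun z hz => hU z (htX z hz),
    fun x hx => Set.mem_iInter₂.2 fun z hz => hXU z (htX z hz) hx,
    PqOn.finset_sup' ht fun z hz => hg z (htX z hz), fun x hx => abs_lt.2 ⟨?_, ?_⟩⟩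
  · obtain ⟨z, hz, hxz⟩ := Set.mem_iUnion₂.1 (hcover hx)
    have : g z x ≤ t.sup' ht g x := Finset.sup'_apply ht g x ▸ Finset.le_sup' (g · x) hz
    linarith [show F x - ε < g z x from hxz]
  · have : t.sup' ht g x ≤ F x + ε / 2 := Finset.sup'_apply ht g x ▸
      Finset.sup'_le ht (g · x) fun z hz => hg_le z (htX z hz) x hx
    linarith

end Pq

section Envelope

variable {n q : ℕ} {X : Set (EuclideanSpace ℂ (Fin n))} {f φ : EuclideanSpace ℂ (Fin n) → ℝ}

theorem le_ftilde (hφ : MemPqX n q X φ) (hφf : ∀ x ∈ X, φ x ≤ f x) {x : EuclideanSpace ℂ (Fin n)}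
    (hx : x ∈ X) : φ x ≤ ftilde n q X f x := by
  unfold ftilde
  exact le_csSup ⟨f x, by rintro _ ⟨ψ, -, hψf, rfl⟩; exact hψf x hx⟩ ⟨φ, hφ, hφf, rfl⟩

theorem exists_gt_ftilde_sub (hφ : MemPqX n q X φ) (hφf : ∀ x ∈ X, φ x ≤ f x)
    (z : EuclideanSpace ℂ (Fin n)) {ε : ℝ} (hε : 0 < ε) :
    ∃ ψ, MemPqX n q X ψ ∧ (∀ x ∈ X, ψ x ≤ f x) ∧ ftilde n q X f z - ε < ψ z := by
  obtain ⟨_, ⟨ψ, hψ, hψf, rfl⟩, hlt⟩ :=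
    exists_lt_of_lt_csSup (s := {y | ∃ ψ, MemPqX n q X ψ ∧ (∀ x ∈ X, ψ x ≤ f x) ∧ y = ψ z})
      ⟨_, φ, hφ, hφf, rfl⟩ (sub_lt_self (ftilde n q X f z) hε)
  exact ⟨ψ, hψ, hψf, hlt⟩

theorem ftilde_eq_zero (h : ¬∃ φ, MemPqX n q X φ ∧ ∀ x ∈ X, φ x ≤ f x) :
    ftilde n q X f = fun _ => 0 := by
  funext z
  unfold ftilde
  convert Real.sSup_empty
  refine Set.eq_empty_of_forall_notMem ?_
  rintro _ ⟨φ, hφ, hφf, -⟩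
  exact h ⟨φ, hφ, hφf⟩

end Envelope

theorem ftilde_mem_PqX_general (n q : ℕ)
    (X : Set (EuclideanSpace ℂ (Fin n))) (hX : IsCompact X)
    (f : EuclideanSpace ℂ (Fin n) → ℝ)
    (hcont : ContinuousOn (ftilde n q X f) X) :
    MemPqX n q X (ftilde n q X f) := by
  by_cases hadm : ∃ φ, MemPqX n q X φ ∧ ∀ x ∈ X, φ x ≤ f x
  · obtain ⟨φ₀, hφ₀, hφ₀f⟩ := hadm
    refine memPqX_of_pointwise_approx hX hcont fun ε hε z hz => ?_
    obtain ⟨φ, hφ, hφf, hφz⟩ := exists_gt_ftilde_sub hφ₀ hφ₀f z (half_pos hε)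
    obtain ⟨U, g, hU, hXU, hg, hgφ⟩ := hφ (ε / 2) (half_pos hε)
    refine ⟨U, g, hU, hXU, hg, fun x hx => ?_, ?_⟩
    · linarith [le_ftilde hφ hφf hx, (abs_lt.1 (hgφ x hx)).2]
    · linarith [(abs_lt.1 (hgφ z hz)).1]
  · rw [ftilde_eq_zero hadm]
    exact memPqX_const X 0

/-- If `f ∈ C(X)` and the envelope `f̃` is continuous on `X`, then `f̃ ∈ P_q(X)`. -/
theorem ftilde_mem_PqX (n q : ℕ) (hq : 1 ≤ q) (hqn : q ≤ n)
    (X : Set (EuclideanSpace ℂ (Fin n))) (hX : IsCompact X)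
    (f : EuclideanSpace ℂ (Fin n) → ℝ) (hf : ContinuousOn f X)
    (hcont : ContinuousOn (ftilde n q X f) X) :
    MemPqX n q X (ftilde n q X f) :=
  ftilde_mem_PqX_general n q X hX f hcont

end
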